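/- arXiv:1909.02763 — 2 statements merged into one kernel-verified Lean document; each statement's English description precedes it below -/
import Mathlib

section
/- For m, n ∈ ℤ, let f_m(t) = 2 ∑_{i≥0} (λ_i / 4^i) t^{2m+2i+1} ∈ ℂ((t)). Then the residue Res_t(f_m'(t) · f_n(t)), i.e., the coefficient of t^{-1} in f_m' f_n, equals (8m+4) δ_{m+n+1,0} + (2m+2) δ_{m+n+2,0}. -/
noncomputable def lam (n : ℕ) : ℂ :=
  (∏ k ∈ Finset.range n, ((1 : ℂ) / 2 - k)) / n.factorial

/-- Formal derivative on Laurent series: (∑ c_k t^k)' = ∑ k c_k t^{k-1}. -/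
noncomputable def lderiv (F : LaurentSeries ℂ) : LaurentSeries ℂ where
  coeff k := (k + 1 : ℤ) • F.coeff (k + 1)
  isPWO_support' := by
    have h : (Function.support fun k : ℤ => (k + 1 : ℤ) • F.coeff (k + 1)) ⊆
        (fun k : ℤ => k - 1) '' F.support := by
      intro k hk
      simp only [Function.mem_support] at hk
      refine ⟨k + 1, ?_, by ring⟩
      simp only [HahnSeries.mem_support]
      intro h0
      apply hk
      rw [h0, smul_zero]
    exact (F.isPWO_support.image_of_monotone (fun a b hab => by omega)).mono h

/-- u = 2 ∑_{i≥0} (λ_i / 4^i) t^{2i+1} ∈ ℂ((t)). -/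
noncomputable def u : LaurentSeries ℂ :=
  HahnSeries.ofPowerSeries ℤ ℂ
    (PowerSeries.mk fun k => if Odd k then 2 * lam (k / 2) / 4 ^ (k / 2) else 0)

/-- f_m = 2 ∑_{i≥0} (λ_i/4^i) t^{2m+2i+1} = t^{2m} · u ∈ ℂ((t)). -/
noncomputable def f (m : ℤ) : LaurentSeries ℂ :=
  HahnSeries.single (2 * m : ℤ) (1 : ℂ) * u

/-! `u` is the expansion of `√(t⁴ + 4t²) = 2t·√(1 + t²/4)`, i.e. `2t` times the binomial
series of exponent `1/2` evaluated at `t²/4`. Hence `u² = 4t² + t⁴` as power series, and then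
`f_m' · f_n = t^(2m+2n-1) · (2m·u + t·u') · u = t^(2m+2n-1) · (2m·u² + t·(u²)'/2)
            = t^(2m+2n-1) · ((8m+4)·t² + (2m+2)·t⁴)`,
whose coefficient of `t⁻¹` is the claimed one. -/

open PowerSeries
open HahnSeries (ofPowerSeries single)

lemma lam_eq_choose (n : ℕ) : lam n = Ring.choose (1 / 2 : ℂ) n := by
  rw [Ring.choose_eq_smul, lam, smul_eq_mul, ← Polynomial.aeval_eq_smeval,
    Polynomial.aeval_def, Polynomial.eval₂_eq_eval_map, descPochhammer_map,
    descPochhammer_eval_eq_prod_range, div_eq_inv_mul]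

lemma binomialSeries_one_half_sq : PowerSeries.binomialSeries ℂ (1 / 2 : ℂ) ^ 2 = 1 + X := by
  rw [sq, ← binomialSeries_add, add_halves, ← Nat.cast_one, binomialSeries_nat, pow_one]

lemma coeff_X_mul_derivative {R : Type*} [CommSemiring R] (φ : R⟦X⟧) (n : ℕ) :
    coeff n (X * d⁄dX R φ) = n * coeff n φ := by
  cases n with
  | zero => simp
  | succ n => rw [coeff_succ_X_mul, coeff_derivative, mul_comm, Nat.cast_succ]

lemma ofPowerSeries_C_mul_X_pow {R : Type*} [CommSemiring R] (a : R) (k : ℕ) :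
    ofPowerSeries ℤ R (C a * X ^ k) = single (k : ℤ) a := by
  rw [map_mul, HahnSeries.ofPowerSeries_C, HahnSeries.ofPowerSeries_X_pow, HahnSeries.C_apply,
    HahnSeries.single_mul_single, zero_add, mul_one]

lemma lderiv_single_mul_ofPowerSeries (a : ℤ) (φ : ℂ⟦X⟧) :
    lderiv (single a 1 * ofPowerSeries ℤ ℂ φ) =
      single (a - 1) 1 * ofPowerSeries ℤ ℂ (C (a : ℂ) * φ + X * d⁄dX ℂ φ) := by
  ext k
  change (k + 1 : ℤ) • _ = _
  rw [HahnSeries.coeff_single_mul, HahnSeries.coeff_single_mul, one_mul, one_mul,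
    sub_sub_eq_add_sub, PowerSeries.coeff_coe, PowerSeries.coeff_coe]
  split_ifs with hneg
  · rw [smul_zero]
  · rw [map_add, coeff_C_mul, coeff_X_mul_derivative, ← add_mul, zsmul_eq_mul,
      Nat.cast_natAbs, abs_of_nonneg (not_lt.mp hneg)]
    push_cast
    ring

noncomputable def uPowerSeries : ℂ⟦X⟧ :=
  C 2 * X *
    expand 2 two_ne_zero (rescale (1 / 4 : ℂ) (PowerSeries.binomialSeries ℂ (1 / 2 : ℂ)))

lemma u_eq_ofPowerSeries : u = ofPowerSeries ℤ ℂ uPowerSeries := by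
  refine congrArg _ (PowerSeries.ext fun k => ?_)
  rcases k with _ | k
  · simp [uPowerSeries]
  · rw [coeff_mk, uPowerSeries, mul_assoc, coeff_C_mul, coeff_succ_X_mul, coeff_expand]
    by_cases hk : 2 ∣ k
    · have hhalf : (k + 1) / 2 = k / 2 := by omega
      rw [if_pos (by simpa [Nat.odd_add_one, even_iff_two_dvd] using hk), if_pos hk, hhalf,
        coeff_rescale, binomialSeries_coeff, lam_eq_choose, smul_eq_mul, mul_one, one_div_pow]
      ring
    · rw [if_neg (by simpa [Nat.odd_add_one, even_iff_two_dvd] using hk), if_neg hk, mul_zero]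

lemma uPowerSeries_sq : uPowerSeries ^ 2 = 4 * X ^ 2 + X ^ 4 := by
  rw [uPowerSeries, mul_pow, mul_pow, ← map_pow, ← map_pow, ← map_pow,
    binomialSeries_one_half_sq]
  simp only [map_add, map_one, rescale_X, map_mul, expand_C, expand_X, map_pow, map_ofNat]
  have h4 : (4 : ℂ⟦X⟧) * C (1 / 4) = 1 := by rw [← map_ofNat C, ← map_mul]; norm_num
  linear_combination X ^ 4 * h4

lemma uPowerSeries_mul_derivative :
    uPowerSeries * d⁄dX ℂ uPowerSeries = 4 * X + 2 * X ^ 3 := by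
  have hd := congrArg (d⁄dX ℂ) uPowerSeries_sq
  rw [← map_ofNat C] at hd
  simp only [derivative_pow, map_add, Derivation.leibniz, derivative_X, derivative_C,
    smul_eq_mul] at hd
  simp only [map_ofNat] at hd
  have h2 : (2 : ℂ⟦X⟧) ≠ 0 := fun h => by simpa [map_ofNat] using congrArg constantCoeff h
  apply mul_left_cancel₀ h2
  linear_combination hd

/-- Res_t(f_m' · f_n) = (8m+4) δ_{m+n+1,0} + (2m+2) δ_{m+n+2,0}, the residue
being the coefficient of t⁻¹. -/
theorem res_fderiv_mul_f (m n : ℤ) :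
    (lderiv (f m) * f n).coeff (-1) =
      (8 * m + 4 : ℂ) * (if m + n + 1 = 0 then 1 else 0) +
        (2 * m + 2 : ℂ) * (if m + n + 2 = 0 then 1 else 0) := by
  have hpoly :
      (C ((2 * m : ℤ) : ℂ) * uPowerSeries + X * d⁄dX ℂ uPowerSeries) * uPowerSeries =
        C (8 * m + 4 : ℂ) * X ^ 2 + C (2 * m + 2 : ℂ) * X ^ 4 := by
    simp only [Int.cast_mul, Int.cast_ofNat, map_mul, map_add, map_ofNat]
    linear_combination 2 * C (m : ℂ) * uPowerSeries_sq + X * uPowerSeries_mul_derivative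
  rw [f, f, u_eq_ofPowerSeries, lderiv_single_mul_ofPowerSeries, mul_mul_mul_comm,
    HahnSeries.single_mul_single, one_mul, ← map_mul, hpoly, map_add,
    ofPowerSeries_C_mul_X_pow, ofPowerSeries_C_mul_X_pow, mul_add, HahnSeries.single_mul_single,
    HahnSeries.single_mul_single, HahnSeries.coeff_add, HahnSeries.coeff_single,
    HahnSeries.coeff_single]
  have h1 : -1 = 2 * m - 1 + 2 * n + ((2 : ℕ) : ℤ) ↔ m + n + 1 = 0 := by omega
  have h2 : -1 = 2 * m - 1 + 2 * n + ((4 : ℕ) : ℤ) ↔ m + n + 2 = 0 := by omega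
  simp only [h1, h2, one_mul, mul_ite, mul_one, mul_zero]
end

section
/- Let V be a vector space with operators h(n) (n ∈ ℤ) satisfying [h(m), h(n)] = (m/2) δ_{m+n,0} · id_V, such that for each v ∈ V, h(n)v = 0 for all sufficiently large n. Define H(m) = h(2m) and H¹(m) = 2 ∑_{i≥0} (λ_i/4^i) h(2m+2i+1) (a well-defined operator since the sum is locally finite). Then for all m, n ∈ ℤ: [H(m), H(n)] = m δ_{m+n,0} · id, [H(m), H¹(n)] = 0, and [H¹(m), H¹(n)] = ((4m+2) δ_{m+n+1,0} + (m+1) δ_{m+n+2,0}) · id. -/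
lemma lam_zero : lam 0 = 1 := by simp [lam]

lemma lam_rec (n : ℕ) : ((n : ℂ) + 1) * lam (n + 1) = ((1 : ℂ) / 2 - n) * lam n := by
  unfold lam
  rw [Finset.prod_range_succ, Nat.factorial_succ]
  have h1 : ((n.factorial : ℂ)) ≠ 0 := Nat.cast_ne_zero.2 n.factorial_ne_zero
  have h2 : ((n : ℂ) + 1) ≠ 0 := Nat.cast_add_one_ne_zero n
  push_cast
  field_simp

noncomputable def gg (s : ℕ) : ℂ := ∑ j ∈ Finset.range (s + 1), lam j * lam (s - j)

lemma sym (s : ℕ) :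
    ∑ j ∈ Finset.range (s + 1), (j : ℂ) * (lam j * lam (s - j)) = (s : ℂ) / 2 * gg s := by
  have h := Finset.sum_range_reflect (fun j => (j : ℂ) * (lam j * lam (s - j))) (s + 1)
  have h2 : ∑ j ∈ Finset.range (s + 1), ((s : ℂ) - j) * (lam (s - j) * lam j)
      = ∑ j ∈ Finset.range (s + 1), (j : ℂ) * (lam j * lam (s - j)) := by
    rw [← h]
    apply Finset.sum_congr rfl
    intro j hj
    rw [Finset.mem_range] at hj
    have hj' : j ≤ s := by omega
    have e1 : s + 1 - 1 - j = s - j := by omega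
    have e2 : s - (s - j) = j := by omega
    have e3 : ((s - j : ℕ) : ℂ) = (s : ℂ) - j := by
      rw [Nat.cast_sub hj']
    simp only [e1, e2, e3]
  have h3 : (∑ j ∈ Finset.range (s + 1), (j : ℂ) * (lam j * lam (s - j)))
      + (∑ j ∈ Finset.range (s + 1), (j : ℂ) * (lam j * lam (s - j)))
      = (s : ℂ) * gg s := by
    nth_rewrite 2 [← h2]
    rw [← Finset.sum_add_distrib]
    unfold gg
    rw [Finset.mul_sum]
    apply Finset.sum_congr rfl
    intro j hj
    ring
  have := h3
  linear_combination this / 2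

lemma gg_succ (s : ℕ) : ((s : ℂ) + 1) * gg (s + 1) = (1 - (s : ℂ)) * gg s := by
  have hs := sym (s + 1)
  have hshift : ∑ j ∈ Finset.range (s + 2), (j : ℂ) * (lam j * lam (s + 1 - j))
      = ∑ k ∈ Finset.range (s + 1), (((k : ℂ) + 1) * lam (k + 1)) * lam (s - k) := by
    rw [Finset.sum_range_succ' (fun j => (j : ℂ) * (lam j * lam (s + 1 - j))) (s + 1)]
    simp only [Nat.cast_zero, zero_mul, add_zero]
    apply Finset.sum_congr rfl
    intro k hk
    push_cast
    ring
  have hrec : ∑ k ∈ Finset.range (s + 1), (((k : ℂ) + 1) * lam (k + 1)) * lam (s - k)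
      = (1 - (s : ℂ)) / 2 * gg s := by
    have : ∑ k ∈ Finset.range (s + 1), (((k : ℂ) + 1) * lam (k + 1)) * lam (s - k)
        = ∑ k ∈ Finset.range (s + 1), ((1 : ℂ) / 2 * (lam k * lam (s - k))
            - (k : ℂ) * (lam k * lam (s - k))) := by
      apply Finset.sum_congr rfl
      intro k hk
      rw [lam_rec k]
      ring
    rw [this, Finset.sum_sub_distrib, sym, ← Finset.mul_sum]
    show (1 : ℂ) / 2 * gg s - _ = _
    ring
  have hs' : ∑ j ∈ Finset.range (s + 2), (j : ℂ) * (lam j * lam (s + 1 - j))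
      = ((s : ℂ) + 1) / 2 * gg (s + 1) := by
    have : ((s + 1 : ℕ) : ℂ) = (s : ℂ) + 1 := by push_cast; ring
    rw [← this]
    exact hs
  rw [hshift, hrec] at hs'
  linear_combination 2 * hs'.symm

lemma gg_val (s : ℕ) : gg s = if s = 0 then 1 else if s = 1 then 1 else 0 := by
  induction s with
  | zero => simp [gg, lam_zero]
  | succ t ih =>
    have h := gg_succ t
    rw [ih] at h
    have hne : ((t : ℂ) + 1) ≠ 0 := Nat.cast_add_one_ne_zero t
    rcases t with _ | _ | k
    · simp only [if_pos rfl] at h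
      simp only [Nat.cast_zero] at h
      norm_num at h
      simpa using h
    · simp only [Nat.cast_one] at h
      norm_num at h
      simpa using h
    · have h0 : (if k + 1 + 1 = 0 then (1 : ℂ) else if k + 1 + 1 = 1 then 1 else 0) = 0 := by
        norm_num
      rw [h0, mul_zero] at h
      have hg : gg (k + 1 + 1 + 1) = 0 := by
        rcases mul_eq_zero.mp h with h' | h'
        · exact absurd h' hne
        · exact h'
      rw [hg]
      norm_num

lemma Lval (s : ℕ) (x : ℂ) :
    ∑ k ∈ Finset.range (s + 1), lam k * lam (s - k) * (x + ((s : ℂ) - k))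
    = (x + (s : ℂ) / 2) * gg s := by
  have h1 : ∑ k ∈ Finset.range (s + 1), lam k * lam (s - k) * (x + ((s : ℂ) - k))
      = ∑ k ∈ Finset.range (s + 1),
          ((x + (s : ℂ)) * (lam k * lam (s - k)) - (k : ℂ) * (lam k * lam (s - k))) := by
    apply Finset.sum_congr rfl
    intro k hk
    ring
  rw [h1, Finset.sum_sub_distrib, sym, ← Finset.mul_sum]
  show (x + (s : ℂ)) * gg s - _ = _
  ring

lemma scalar_key (m n : ℤ) (K : ℕ) (hK : (-(m + n + 1)).toNat < K) :
    ∑ i ∈ Finset.range K, ∑ j ∈ Finset.range K,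
      (2 * lam i / 4 ^ i) * (2 * lam j / 4 ^ j) *
        (((2 * m + 2 * (j : ℤ) + 1 : ℤ) : ℂ) / 2 *
          (if (2 * m + 2 * (j : ℤ) + 1) + (2 * n + 2 * (i : ℤ) + 1) = 0 then 1 else 0))
    = (4 * (m : ℂ) + 2) * (if m + n + 1 = 0 then 1 else 0) +
      ((m : ℂ) + 1) * (if m + n + 2 = 0 then 1 else 0) := by
  by_cases hpos : 0 < m + n + 1
  · rw [if_neg (by omega), if_neg (by omega), mul_zero, mul_zero, add_zero]
    apply Finset.sum_eq_zero
    intro i _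
    apply Finset.sum_eq_zero
    intro j _
    rw [if_neg (by omega), mul_zero, mul_zero]
  · set s : ℕ := (-(m + n + 1)).toNat with hsdef
    have hs : m + n + 1 = -(s : ℤ) := by omega
    have hsK : s < K := hK
    -- rewrite each term with nat condition
    have step1 : ∑ i ∈ Finset.range K, ∑ j ∈ Finset.range K,
        (2 * lam i / 4 ^ i) * (2 * lam j / 4 ^ j) *
          (((2 * m + 2 * (j : ℤ) + 1 : ℤ) : ℂ) / 2 *
            (if (2 * m + 2 * (j : ℤ) + 1) + (2 * n + 2 * (i : ℤ) + 1) = 0 then 1 else 0))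
        = ∑ i ∈ Finset.range K, ∑ j ∈ Finset.range K,
            (if i + j = s then
              (2 * lam i / 4 ^ i) * (2 * lam j / 4 ^ j) *
                (((2 * m + 2 * (j : ℤ) + 1 : ℤ) : ℂ) / 2) else 0) := by
      apply Finset.sum_congr rfl
      intro i _
      apply Finset.sum_congr rfl
      intro j _
      by_cases hij : i + j = s
      · rw [if_pos (by omega), if_pos hij, mul_one]
      · rw [if_neg (by omega), if_neg hij, mul_zero, mul_zero]
    rw [step1]
    -- collapse inner sum
    have step2 : ∀ i ∈ Finset.range K,
        (∑ j ∈ Finset.range K,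
          (if i + j = s then
            (2 * lam i / 4 ^ i) * (2 * lam j / 4 ^ j) *
              (((2 * m + 2 * (j : ℤ) + 1 : ℤ) : ℂ) / 2) else 0))
        = (if i ≤ s then
            (2 * lam i / 4 ^ i) * (2 * lam (s - i) / 4 ^ (s - i)) *
              (((2 * m + 2 * ((s - i : ℕ) : ℤ) + 1 : ℤ) : ℂ) / 2) else 0) := by
      intro i hi
      by_cases his : i ≤ s
      · rw [if_pos his]
        have e : ∀ j ∈ Finset.range K, (if i + j = s then
            (2 * lam i / 4 ^ i) * (2 * lam j / 4 ^ j) *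
              (((2 * m + 2 * (j : ℤ) + 1 : ℤ) : ℂ) / 2) else 0)
            = (if j = s - i then
            (2 * lam i / 4 ^ i) * (2 * lam j / 4 ^ j) *
              (((2 * m + 2 * (j : ℤ) + 1 : ℤ) : ℂ) / 2) else 0) := by
          intro j _
          have : (i + j = s) ↔ (j = s - i) := by omega
          exact if_congr this rfl rfl
        rw [Finset.sum_congr rfl e, Finset.sum_ite_eq' (Finset.range K) (s - i)]
        rw [if_pos (Finset.mem_range.2 (by omega))]
      · rw [if_neg his]
        apply Finset.sum_eq_zero
        intro j _
        rw [if_neg (by omega)]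
    rw [Finset.sum_congr rfl step2]
    -- restrict to range (s+1)
    have step3 : ∑ i ∈ Finset.range K,
        (if i ≤ s then
            (2 * lam i / 4 ^ i) * (2 * lam (s - i) / 4 ^ (s - i)) *
              (((2 * m + 2 * ((s - i : ℕ) : ℤ) + 1 : ℤ) : ℂ) / 2) else 0)
        = ∑ i ∈ Finset.range (s + 1),
            (2 * lam i / 4 ^ i) * (2 * lam (s - i) / 4 ^ (s - i)) *
              (((2 * m + 2 * ((s - i : ℕ) : ℤ) + 1 : ℤ) : ℂ) / 2) := by
      rw [← Finset.sum_subset (Finset.range_subset_range.2 (by omega : s + 1 ≤ K))]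
      · apply Finset.sum_congr rfl
        intro i hi
        rw [Finset.mem_range] at hi
        rw [if_pos (by omega)]
      · intro x _ hx
        rw [Finset.mem_range] at hx
        rw [if_neg (by omega)]
    rw [step3]
    -- convert to Lval form
    have hfour : ((4 : ℂ)) ^ s ≠ 0 := pow_ne_zero _ (by norm_num)
    have step4 : ∑ i ∈ Finset.range (s + 1),
        (2 * lam i / 4 ^ i) * (2 * lam (s - i) / 4 ^ (s - i)) *
          (((2 * m + 2 * ((s - i : ℕ) : ℤ) + 1 : ℤ) : ℂ) / 2)
        = (4 / 4 ^ s) * ∑ k ∈ Finset.range (s + 1),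
            lam k * lam (s - k) * ((((m : ℂ) + 1 / 2)) + ((s : ℂ) - k)) := by
      rw [Finset.mul_sum]
      apply Finset.sum_congr rfl
      intro i hi
      rw [Finset.mem_range] at hi
      have hi' : i ≤ s := by omega
      have epow : (4 : ℂ) ^ i * 4 ^ (s - i) = 4 ^ s := by
        rw [← pow_add]
        congr 1
        omega
      have ecast : ((s - i : ℕ) : ℂ) = (s : ℂ) - i := by rw [Nat.cast_sub hi']
      have hne1 : (4 : ℂ) ^ i ≠ 0 := pow_ne_zero _ (by norm_num)
      have hne2 : (4 : ℂ) ^ (s - i) ≠ 0 := pow_ne_zero _ (by norm_num)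
      push_cast
      rw [ecast]
      field_simp
      rw [← epow]
      ring
    rw [step4, Lval, gg_val]
    rcases Nat.lt_or_ge s 2 with hs2 | hs2
    · interval_cases s
      · rw [if_pos rfl, if_pos (by omega), if_neg (by omega)]
        norm_num
        ring
      · rw [if_neg (by norm_num), if_pos rfl, if_neg (by omega), if_pos (by omega)]
        norm_num
        ring
    · rw [if_neg (by omega), if_neg (by omega), if_neg (by omega), if_neg (by omega)]
      ring

/-- Let V carry operators h(n) with [h(m), h(n)] = (m/2) δ_{m+n,0} id, restricted
so that each v is killed by h(n) for n large. Let H(m) = h(2m) and let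
H¹(m) be the (locally finite, hence well-defined) sum
2 ∑_{i≥0} (λ_i/4^i) h(2m+2i+1), expressed by the hypothesis `hH1` that H¹(m)v
agrees with all sufficiently long partial sums. Then
[H(m), H(n)] = m δ_{m+n,0} id, [H(m), H¹(n)] = 0, and
[H¹(m), H¹(n)] = ((4m+2) δ_{m+n+1,0} + (m+1) δ_{m+n+2,0}) id. -/
theorem threePoint_heisenberg_relations
    {V : Type*} [AddCommGroup V] [Module ℂ V]
    (h : ℤ → Module.End ℂ V)
    (hcomm : ∀ m n : ℤ, h m * h n - h n * h m =
      (((m : ℂ) / 2) * (if m + n = 0 then 1 else 0)) • (1 : Module.End ℂ V))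
    (hres : ∀ v : V, ∃ N : ℤ, ∀ n : ℤ, N ≤ n → h n v = 0)
    (H1 : ℤ → Module.End ℂ V)
    (hH1 : ∀ (m : ℤ) (v : V), ∃ N : ℕ, ∀ N' : ℕ, N ≤ N' →
      H1 m v = ∑ i ∈ Finset.range N',
        (2 * lam i / 4 ^ i) • h (2 * m + 2 * (i : ℤ) + 1) v) :
    ∀ m n : ℤ,
      (h (2 * m) * h (2 * n) - h (2 * n) * h (2 * m) =
        ((m : ℂ) * (if m + n = 0 then 1 else 0)) • (1 : Module.End ℂ V)) ∧
      (h (2 * m) * H1 n - H1 n * h (2 * m) = 0) ∧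
      (H1 m * H1 n - H1 n * H1 m =
        ((4 * (m : ℂ) + 2) * (if m + n + 1 = 0 then 1 else 0) +
          ((m : ℂ) + 1) * (if m + n + 2 = 0 then 1 else 0)) •
            (1 : Module.End ℂ V)) := by
  have comm : ∀ (a b : ℤ) (v : V), h a (h b v) - h b (h a v)
      = (((a : ℂ) / 2) * (if a + b = 0 then 1 else 0)) • v := by
    intro a b v
    have hx := LinearMap.ext_iff.1 (hcomm a b) v
    rw [LinearMap.sub_apply, Module.End.mul_apply, Module.End.mul_apply,
      LinearMap.smul_apply, Module.End.one_apply] at hx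
    exact hx
  refine fun m n => ⟨?_, ?_, ?_⟩
  · rw [hcomm (2 * m) (2 * n)]
    have e : ((2 * m : ℤ) : ℂ) / 2 * (if 2 * m + 2 * n = 0 then (1 : ℂ) else 0)
        = (m : ℂ) * (if m + n = 0 then 1 else 0) := by
      have h2 : (2 * m + 2 * n = 0) ↔ (m + n = 0) := by omega
      rw [if_congr h2 rfl rfl]
      push_cast
      ring
    rw [e]
  · ext v
    simp only [LinearMap.sub_apply, Module.End.mul_apply, LinearMap.zero_apply]
    rw [sub_eq_zero]
    obtain ⟨N1, hN1⟩ := hH1 n v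
    obtain ⟨N2, hN2⟩ := hH1 n (h (2 * m) v)
    rw [hN1 (max N1 N2) (le_max_left _ _), hN2 (max N1 N2) (le_max_right _ _), map_sum]
    apply Finset.sum_congr rfl
    intro i _
    rw [map_smul]
    congr 1
    have hc := comm (2 * m) (2 * n + 2 * (i : ℤ) + 1) v
    rw [if_neg (by omega), mul_zero, zero_smul, sub_eq_zero] at hc
    exact hc
  · ext v
    simp only [LinearMap.sub_apply, Module.End.mul_apply, LinearMap.smul_apply,
      Module.End.one_apply]
    obtain ⟨Nres, hNres⟩ := hres v
    obtain ⟨N1, hN1⟩ := hH1 n v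
    obtain ⟨N2, hN2⟩ := hH1 m v
    set s : ℕ := (-(m + n + 1)).toNat with hsdef
    set K0 : ℕ := N1 + N2 + (Nres - 2 * n).toNat + (Nres - 2 * m).toNat with hK0def
    have hK0n : ∀ i : ℕ, K0 ≤ i → Nres ≤ 2 * n + 2 * (i : ℤ) + 1 := by
      intro i hi; omega
    have hK0m : ∀ i : ℕ, K0 ≤ i → Nres ≤ 2 * m + 2 * (i : ℤ) + 1 := by
      intro i hi; omega
    choose A hA using fun i : ℕ => hH1 m (h (2 * n + 2 * (i : ℤ) + 1) v)
    choose B hB using fun i : ℕ => hH1 n (h (2 * m + 2 * (i : ℤ) + 1) v)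
    set K : ℕ := K0 + (s + 1) + (Finset.range K0).sup A + (Finset.range K0).sup B with hKdef
    have hKK0 : K0 ≤ K := by omega
    have claim1 : ∀ i ∈ Finset.range K,
        H1 m (h (2 * n + 2 * (i : ℤ) + 1) v)
        = ∑ j ∈ Finset.range K,
            (2 * lam j / 4 ^ j) • h (2 * m + 2 * (j : ℤ) + 1) (h (2 * n + 2 * (i : ℤ) + 1) v) := by
      intro i _
      by_cases hiK : i < K0
      · refine hA i K ?_
        have := Finset.le_sup (f := A) (Finset.mem_range.2 hiK)
        omega
      · have hz : h (2 * n + 2 * (i : ℤ) + 1) v = 0 := hNres _ (hK0n i (by omega))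
        rw [hz, map_zero]
        symm
        apply Finset.sum_eq_zero
        intro j _
        rw [map_zero, smul_zero]
    have claim2 : ∀ i ∈ Finset.range K,
        H1 n (h (2 * m + 2 * (i : ℤ) + 1) v)
        = ∑ j ∈ Finset.range K,
            (2 * lam j / 4 ^ j) • h (2 * n + 2 * (j : ℤ) + 1) (h (2 * m + 2 * (i : ℤ) + 1) v) := by
      intro i _
      by_cases hiK : i < K0
      · refine hB i K ?_
        have := Finset.le_sup (f := B) (Finset.mem_range.2 hiK)
        omega
      · have hz : h (2 * m + 2 * (i : ℤ) + 1) v = 0 := hNres _ (hK0m i (by omega))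
        rw [hz, map_zero]
        symm
        apply Finset.sum_eq_zero
        intro j _
        rw [map_zero, smul_zero]
    have E1 : H1 m (H1 n v) = ∑ i ∈ Finset.range K, ∑ j ∈ Finset.range K,
        (2 * lam i / 4 ^ i) • (2 * lam j / 4 ^ j) •
          h (2 * m + 2 * (j : ℤ) + 1) (h (2 * n + 2 * (i : ℤ) + 1) v) := by
      rw [hN1 K (by omega), map_sum]
      refine Finset.sum_congr rfl fun i hi => ?_
      rw [map_smul, claim1 i hi, Finset.smul_sum]
    have E2 : H1 n (H1 m v) = ∑ i ∈ Finset.range K, ∑ j ∈ Finset.range K,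
        (2 * lam j / 4 ^ j) • (2 * lam i / 4 ^ i) •
          h (2 * n + 2 * (i : ℤ) + 1) (h (2 * m + 2 * (j : ℤ) + 1) v) := by
      rw [hN2 K (by omega), map_sum]
      have : ∑ i ∈ Finset.range K,
          ((2 * lam i / 4 ^ i) • H1 n (h (2 * m + 2 * (i : ℤ) + 1) v))
          = ∑ i ∈ Finset.range K, ∑ j ∈ Finset.range K,
            (2 * lam i / 4 ^ i) • (2 * lam j / 4 ^ j) •
              h (2 * n + 2 * (j : ℤ) + 1) (h (2 * m + 2 * (i : ℤ) + 1) v) := by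
        refine Finset.sum_congr rfl fun i hi => ?_
        rw [claim2 i hi, Finset.smul_sum]
      rw [Finset.sum_congr rfl fun i (_ : i ∈ Finset.range K) =>
        map_smul (H1 n) (2 * lam i / 4 ^ i) (h (2 * m + 2 * (i : ℤ) + 1) v)]
      rw [this, Finset.sum_comm]
    rw [E1, E2, ← Finset.sum_sub_distrib]
    have final : ∀ i ∈ Finset.range K,
        ((∑ j ∈ Finset.range K,
          (2 * lam i / 4 ^ i) • (2 * lam j / 4 ^ j) •
            h (2 * m + 2 * (j : ℤ) + 1) (h (2 * n + 2 * (i : ℤ) + 1) v))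
        - ∑ j ∈ Finset.range K,
          (2 * lam j / 4 ^ j) • (2 * lam i / 4 ^ i) •
            h (2 * n + 2 * (i : ℤ) + 1) (h (2 * m + 2 * (j : ℤ) + 1) v))
        = ∑ j ∈ Finset.range K,
            ((2 * lam i / 4 ^ i) * (2 * lam j / 4 ^ j) *
              (((2 * m + 2 * (j : ℤ) + 1 : ℤ) : ℂ) / 2 *
                (if (2 * m + 2 * (j : ℤ) + 1) + (2 * n + 2 * (i : ℤ) + 1) = 0 then 1 else 0))) • v := by
      intro i _
      rw [← Finset.sum_sub_distrib]
      refine Finset.sum_congr rfl fun j _ => ?_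
      rw [smul_smul, smul_smul, mul_comm (2 * lam j / 4 ^ j) (2 * lam i / 4 ^ i),
        ← smul_sub, comm, smul_smul, mul_assoc]
    rw [Finset.sum_congr rfl final]
    have := scalar_key m n K (by omega)
    rw [show (∑ i ∈ Finset.range K, ∑ j ∈ Finset.range K,
        ((2 * lam i / 4 ^ i) * (2 * lam j / 4 ^ j) *
          (((2 * m + 2 * (j : ℤ) + 1 : ℤ) : ℂ) / 2 *
            (if (2 * m + 2 * (j : ℤ) + 1) + (2 * n + 2 * (i : ℤ) + 1) = 0 then 1 else 0))) • v)
        = (∑ i ∈ Finset.range K, ∑ j ∈ Finset.range K,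
        (2 * lam i / 4 ^ i) * (2 * lam j / 4 ^ j) *
          (((2 * m + 2 * (j : ℤ) + 1 : ℤ) : ℂ) / 2 *
            (if (2 * m + 2 * (j : ℤ) + 1) + (2 * n + 2 * (i : ℤ) + 1) = 0 then 1 else 0))) • v by
      rw [Finset.sum_smul]
      exact Finset.sum_congr rfl fun i _ => (Finset.sum_smul).symm]
    rw [this]
end
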